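/- arXiv:2512.21721 — 3 statements merged into one kernel-verified Lean document; each statement's English description precedes it below -/
import Mathlib

section
/- Let p be an agent with neighborhood N_p ⊆ [n] containing p, let x : [n] → ℝ, and let x_p* = (1/|N_p|) ∑_{j ∈ N_p} x_j be the average of x over N_p. Then for any subset N_p* ⊆ N_p with p ∈ N_p*, the quantity 2·( ∑_{j ∈ N_p ∩ N_p* \ {p}} [(x_p − x_j)² − (x_p* − x_j)²] + ∑_{j ∈ N_p \ N_p*} (x_p − x_j)² ) is at least 2(|N_p| + 1)(x_p − x_p*)². -/
/-!
Write `f j = (x p - x j)² - (x* - x j)²`. Since `x*` is the mean of `x` over `N_p`, the sum of `f`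
over `N_p` is `|N_p| (x p - x*)²`, and `f p = -(x p - x*)²`, so `f` sums to `(|N_p| + 1)(x p - x*)²`
over `N_p \ {p}`. Up to the factor 2, the left-hand side is this sum with `f j` replaced by the
larger `(x p - x j)²` for `j ∉ N_p*`, plus possibly the term `(x p - x p)² = 0`.
-/

open Finset

namespace Finset

theorem sum_sdiff_singleton_le_sum_inter_sdiff_singleton_add_sum_sdiff {ι M : Type*}
    [DecidableEq ι] [AddCommMonoid M] [PartialOrder M] [IsOrderedAddMonoid M]
    (s t : Finset ι) (p : ι) {f g : ι → M} (hfg : ∀ j ∈ s, f j ≤ g j) (hg : ∀ j ∈ s, 0 ≤ g j) :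
    ∑ j ∈ s \ {p}, f j ≤ ∑ j ∈ (s ∩ t) \ {p}, f j + ∑ j ∈ s \ t, g j := by
  rw [← sum_inter_add_sum_sdiff (s \ {p}) t f, sdiff_inter_right_comm]
  refine add_le_add_right ?_ _
  calc ∑ j ∈ (s \ {p}) \ t, f j ≤ ∑ j ∈ (s \ {p}) \ t, g j :=
        sum_le_sum fun j hj => hfg j (mem_sdiff.mp (mem_sdiff.mp hj).1).1
    _ ≤ ∑ j ∈ s \ t, g j :=
        sum_le_sum_of_subset_of_nonneg (sdiff_subset_sdiff sdiff_subset le_rfl)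
          fun j hj _ => hg j (mem_sdiff.mp hj).1

end Finset

theorem sum_sq_sub_sub_sq_sub_of_card_mul_eq_sum {ι : Type*} (s : Finset ι) (x : ι → ℝ)
    (a m : ℝ) (hm : (s.card : ℝ) * m = ∑ j ∈ s, x j) :
    ∑ j ∈ s, ((a - x j) ^ 2 - (m - x j) ^ 2) = s.card * (a - m) ^ 2 := by
  have hterm : ∀ j, (a - x j) ^ 2 - (m - x j) ^ 2 = (a - m) * (a + m) - 2 * (a - m) * x j :=
    fun j => by ring
  simp only [hterm, sum_sub_distrib, sum_const, nsmul_eq_mul, ← mul_sum, ← hm]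
  ring

theorem sum_sdiff_singleton_sq_sub_sub_sq_sub_of_card_mul_eq_sum {ι : Type*} [DecidableEq ι]
    {s : Finset ι} {p : ι} (hp : p ∈ s) (x : ι → ℝ) (m : ℝ)
    (hm : (s.card : ℝ) * m = ∑ j ∈ s, x j) :
    ∑ j ∈ s \ {p}, ((x p - x j) ^ 2 - (m - x j) ^ 2) = (s.card + 1) * (x p - m) ^ 2 := by
  have hsum := sum_sq_sub_sub_sq_sub_of_card_mul_eq_sum s x (x p) m hm
  rw [sum_eq_sum_sdiff_singleton_add hp] at hsum
  linarith

theorem stmt_0_general {n : ℕ} (p : Fin n) (Np Nps : Finset (Fin n)) (x : Fin n → ℝ)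
    (hp : p ∈ Np)
    (xstar : ℝ) (hxstar : xstar = (∑ j ∈ Np, x j) / (Np.card : ℝ)) :
    2 * ((∑ j ∈ (Np ∩ Nps) \ {p}, ((x p - x j) ^ 2 - (xstar - x j) ^ 2)) +
        ∑ j ∈ Np \ Nps, (x p - x j) ^ 2) ≥
      2 * ((Np.card : ℝ) + 1) * (x p - xstar) ^ 2 := by
  have hcard : (Np.card : ℝ) ≠ 0 := Nat.cast_ne_zero.mpr (card_ne_zero_of_mem hp)
  have hmean : (Np.card : ℝ) * xstar = ∑ j ∈ Np, x j := by
    rw [hxstar, mul_div_cancel₀ _ hcard]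
  have hle := sum_sdiff_singleton_le_sum_inter_sdiff_singleton_add_sum_sdiff Np Nps p
    (f := fun j => (x p - x j) ^ 2 - (xstar - x j) ^ 2) (g := fun j => (x p - x j) ^ 2)
    (fun j _ => sub_le_self _ (sq_nonneg _)) (fun j _ => sq_nonneg _)
  rw [sum_sdiff_singleton_sq_sub_sub_sq_sub_of_card_mul_eq_sum hp x xstar hmean] at hle
  linarith

theorem stmt_0 {n : ℕ} (p : Fin n) (Np Nps : Finset (Fin n)) (x : Fin n → ℝ)
    (hp : p ∈ Np) (hsub : Nps ⊆ Np) (hps : p ∈ Nps)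
    (xstar : ℝ) (hxstar : xstar = (∑ j ∈ Np, x j) / (Np.card : ℝ)) :
    2 * ((∑ j ∈ (Np ∩ Nps) \ {p}, ((x p - x j) ^ 2 - (xstar - x j) ^ 2)) +
        ∑ j ∈ Np \ Nps, (x p - x j) ^ 2) ≥
      2 * ((Np.card : ℝ) + 1) * (x p - xstar) ^ 2 :=
  stmt_0_general p Np Nps x hp xstar hxstar
end

section
/- Let G be a connected simple undirected graph on [h] with 2 ≤ h ≤ n, let x ∈ ℝ^h be a vector whose entries are not all within δ of each other, i.e., max_i x_i − min_i x_i > δ for some δ > 0, and let x* be the result of replacing each x_i by the average of x over the closed neighborhood of i. Then ∑_{i∈[h]} (x_i − x_i*)² ≥ 2δ²/n⁸. -/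
/-! With `L` the graph Laplacian and `dᵢ = deg i + 1 = |Nᵢ|`, one has `dᵢ (xᵢ - x*ᵢ) = (L x)ᵢ`.
Let `D = x u - x v` be the range of `x` and `c` its midpoint. Along a path from `u` to `v`
some edge `ab` carries a drop `e = x a - x b ≥ D / h`, and
`(x - c)ᵀ L x = ½ ∑_{i ~ j} (xᵢ - xⱼ)² ≥ e²`. Writing `(x - c)ᵀ L x = ∑ dᵢ (xᵢ - c) (xᵢ - x*ᵢ)`
and using Cauchy–Schwarz with `|dᵢ (xᵢ - c)| ≤ h D / 2` gives
`D⁴ / h⁴ ≤ h³ D² / 4 · ∑ (xᵢ - x*ᵢ)²`. -/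

open Finset Matrix

namespace SimpleGraph

variable {V : Type*} {G : SimpleGraph V}

lemma Walk.exists_adj_sub_le_length_mul (x : V → ℝ) {u v : V} (p : G.Walk u v)
    (huv : x v < x u) : ∃ a b, G.Adj a b ∧ x u - x v ≤ p.length * (x a - x b) := by
  induction p with
  | nil => exact absurd huv (lt_irrefl _)
  | @cons u w v hadj q ih =>
    rw [length_cons, Nat.cast_succ]
    by_cases hwv : x v < x w
    · obtain ⟨a, b, hab, hle⟩ := ih hwv
      by_cases hstep : x u - x w ≤ x a - x b
      · exact ⟨a, b, hab, by nlinarith⟩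
      · exact ⟨u, w, hadj, by nlinarith [q.length.cast_nonneg (α := ℝ)]⟩
    · exact ⟨u, w, hadj, by nlinarith [q.length.cast_nonneg (α := ℝ)]⟩

variable [Fintype V]

lemma Connected.exists_adj_sub_le_card_mul (hG : G.Connected) (x : V → ℝ) {u v : V}
    (huv : x v < x u) : ∃ a b, G.Adj a b ∧ x u - x v ≤ Fintype.card V * (x a - x b) := by
  obtain ⟨p, hp⟩ := (hG u v).exists_isPath
  obtain ⟨a, b, hab, hle⟩ := p.exists_adj_sub_le_length_mul x huv
  have hlen : (p.length : ℝ) ≤ Fintype.card V := by exact_mod_cast hp.length_lt.le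
  refine ⟨a, b, hab, hle.trans (mul_le_mul_of_nonneg_right hlen ?_)⟩
  by_contra! hneg
  nlinarith [p.length.cast_nonneg (α := ℝ)]

variable [DecidableEq V] [DecidableRel G.Adj]

variable (G) in
noncomputable def closedNbhdMean (x : V → ℝ) (i : V) : ℝ :=
  (∑ j ∈ insert i (G.neighborFinset i), x j) / #(insert i (G.neighborFinset i))

lemma degree_add_one_mul_sub_closedNbhdMean (x : V → ℝ) (i : V) :
    (G.degree i + 1) * (x i - G.closedNbhdMean x i) = (G.lapMatrix ℝ *ᵥ x) i := by
  have hi : i ∉ G.neighborFinset i := by simp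
  rw [closedNbhdMean, card_insert_of_notMem hi, card_neighborFinset_eq_degree, sum_insert hi,
    lapMatrix_mulVec_apply]
  push_cast
  field_simp
  ring

lemma lapMatrix_mulVec_sub_const (x : V → ℝ) (c : ℝ) :
    G.lapMatrix ℝ *ᵥ (x - fun _ ↦ c) = G.lapMatrix ℝ *ᵥ x := by
  ext i
  simp [lapMatrix_mulVec_apply, mul_sub]

lemma sq_sub_le_dotProduct_lapMatrix_mulVec (x : V → ℝ) {a b : V} (hab : G.Adj a b) :
    (x a - x b) ^ 2 ≤ x ⬝ᵥ (G.lapMatrix ℝ *ᵥ x) := by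
  rw [← toLinearMap₂'_apply', lapMatrix_toLinearMap₂', ← Fintype.sum_prod_type',
    le_div_iff₀ two_pos]
  have hne : (a, b) ≠ (b, a) := fun h ↦ hab.ne (Prod.ext_iff.mp h).1
  calc (x a - x b) ^ 2 * 2 = (if G.Adj a b then (x a - x b) ^ 2 else 0)
        + (if G.Adj b a then (x b - x a) ^ 2 else 0) := by simp [hab, hab.symm]; ring
    _ ≤ _ := add_le_sum (f := fun q : V × V ↦ if G.Adj q.1 q.2 then (x q.1 - x q.2) ^ 2 else 0)
      (fun _ _ ↦ by positivity) (mem_univ _) (mem_univ _) hne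

lemma sq_dotProduct_lapMatrix_mulVec_le (z x : V → ℝ) {B : ℝ} (hz : ∀ i, |z i| ≤ B) :
    (z ⬝ᵥ (G.lapMatrix ℝ *ᵥ x)) ^ 2 ≤
      Fintype.card V ^ 3 * B ^ 2 * ∑ i, (x i - G.closedNbhdMean x i) ^ 2 := by
  have hweight (i : V) : ((G.degree i + 1) * z i) ^ 2 ≤ (Fintype.card V) ^ 2 * B ^ 2 := by
    have hdeg : (G.degree i + 1 : ℝ) ≤ Fintype.card V := by
      exact_mod_cast G.degree_lt_card_verts i
    have hz2 : z i ^ 2 ≤ B ^ 2 := sq_abs (z i) ▸ pow_le_pow_left₀ (abs_nonneg _) (hz i) 2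
    rw [mul_pow]
    exact mul_le_mul (pow_le_pow_left₀ (by positivity) hdeg 2) hz2 (sq_nonneg _) (by positivity)
  calc (z ⬝ᵥ (G.lapMatrix ℝ *ᵥ x)) ^ 2
      = (∑ i, ((G.degree i + 1) * z i) * (x i - G.closedNbhdMean x i)) ^ 2 := by
        simp only [dotProduct, ← degree_add_one_mul_sub_closedNbhdMean]
        congr 1; refine sum_congr rfl fun i _ ↦ by ring
    _ ≤ (∑ i, ((G.degree i + 1) * z i) ^ 2) * ∑ i, (x i - G.closedNbhdMean x i) ^ 2 :=
        sum_mul_sq_le_sq_mul_sq _ _ _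
    _ ≤ (∑ _i : V, (Fintype.card V : ℝ) ^ 2 * B ^ 2) *
          ∑ i, (x i - G.closedNbhdMean x i) ^ 2 := by
        gcongr with i; exact hweight i
    _ = _ := by rw [sum_const, card_univ, nsmul_eq_mul]; ring

theorem Connected.four_mul_sq_sub_le_card_pow_mul_sum_sq (hG : G.Connected) (x : V → ℝ)
    {u v : V} (hx : ∀ i, x v ≤ x i ∧ x i ≤ x u) :
    4 * (x u - x v) ^ 2 ≤ Fintype.card V ^ 7 * ∑ i, (x i - G.closedNbhdMean x i) ^ 2 := by
  set Q := ∑ i, (x i - G.closedNbhdMean x i) ^ 2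
  set N : ℝ := (Fintype.card V : ℝ)
  rcases (hx u).1.eq_or_lt with hconst | huv
  · rw [hconst, sub_self, zero_pow two_ne_zero, mul_zero]; positivity
  obtain ⟨a, b, hab, hgap⟩ := hG.exists_adj_sub_le_card_mul x huv
  set z := x - fun _ ↦ (x u + x v) / 2
  have hz (i : V) : |z i| ≤ (x u - x v) / 2 := by
    simp only [z, Pi.sub_apply, abs_le]
    constructor <;> linarith [hx i]
  have hedge : (x a - x b) ^ 2 ≤ z ⬝ᵥ (G.lapMatrix ℝ *ᵥ x) := by
    simpa [z, lapMatrix_mulVec_sub_const] using sq_sub_le_dotProduct_lapMatrix_mulVec z hab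
  have hCS := sq_dotProduct_lapMatrix_mulVec_le (G := G) z x hz
  refine le_of_mul_le_mul_left ?_ (by positivity : 0 < (x u - x v) ^ 2)
  calc (x u - x v) ^ 2 * (4 * (x u - x v) ^ 2) = 4 * (x u - x v) ^ 4 := by ring
    _ ≤ 4 * (N * (x a - x b)) ^ 4 := by gcongr
    _ = 4 * N ^ 4 * ((x a - x b) ^ 2) ^ 2 := by ring
    _ ≤ 4 * N ^ 4 * (z ⬝ᵥ (G.lapMatrix ℝ *ᵥ x)) ^ 2 := by gcongr
    _ ≤ 4 * N ^ 4 * (N ^ 3 * ((x u - x v) / 2) ^ 2 * Q) := by gcongr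
    _ = (x u - x v) ^ 2 * (N ^ 7 * Q) := by ring

end SimpleGraph

theorem stmt_11_general {h n : ℕ} (hhn : h ≤ n)
    (G : SimpleGraph (Fin h)) [DecidableRel G.Adj] (hconn : G.Connected)
    (x : Fin h → ℝ) (δ : ℝ) (hδ : 0 < δ)
    (hne : (Finset.univ : Finset (Fin h)).Nonempty)
    (hgap : Finset.univ.sup' hne x - Finset.univ.inf' hne x > δ)
    (xstar : Fin h → ℝ)
    (hxstar : ∀ i, xstar i =
      (∑ j ∈ insert i (G.neighborFinset i), x j) / ((insert i (G.neighborFinset i)).card : ℝ)) :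
    ∑ i, (x i - xstar i) ^ 2 ≥ 2 * δ ^ 2 / (n : ℝ) ^ 8 := by
  obtain ⟨u, -, hu⟩ := exists_mem_eq_sup' hne x
  obtain ⟨v, -, hv⟩ := exists_mem_eq_inf' hne x
  have hx (i : Fin h) : x v ≤ x i ∧ x i ≤ x u :=
    ⟨hv ▸ inf'_le x (mem_univ i), hu ▸ le_sup' x (mem_univ i)⟩
  have hmain := hconn.four_mul_sq_sub_le_card_pow_mul_sum_sq x hx
  have hmean : G.closedNbhdMean x = xstar := (funext hxstar).symm
  rw [Fintype.card_fin, hmean] at hmain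
  rw [hu, hv] at hgap
  have hhn' : (h : ℝ) ≤ n := by exact_mod_cast hhn
  have hn : (1 : ℝ) ≤ n := le_trans (by exact_mod_cast v.pos) hhn'
  rw [ge_iff_le, div_le_iff₀ (by positivity)]
  calc 2 * δ ^ 2 ≤ 4 * (x u - x v) ^ 2 := by nlinarith
    _ ≤ h ^ 7 * ∑ i, (x i - xstar i) ^ 2 := hmain
    _ ≤ n ^ 8 * ∑ i, (x i - xstar i) ^ 2 := by
      gcongr
      exact (pow_le_pow_left₀ (by positivity) hhn' 7).trans
        (pow_le_pow_right₀ hn (by norm_num))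
    _ = (∑ i, (x i - xstar i) ^ 2) * n ^ 8 := mul_comm _ _

theorem stmt_11 {h n : ℕ} (hh : 2 ≤ h) (hhn : h ≤ n)
    (G : SimpleGraph (Fin h)) [DecidableRel G.Adj] (hconn : G.Connected)
    (x : Fin h → ℝ) (δ : ℝ) (hδ : 0 < δ)
    (hne : (Finset.univ : Finset (Fin h)).Nonempty)
    (hgap : Finset.univ.sup' hne x - Finset.univ.inf' hne x > δ)
    (xstar : Fin h → ℝ)
    (hxstar : ∀ i, xstar i =
      (∑ j ∈ insert i (G.neighborFinset i), x j) / ((insert i (G.neighborFinset i)).card : ℝ)) :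
    ∑ i, (x i - xstar i) ^ 2 ≥ 2 * δ ^ 2 / (n : ℝ) ^ 8 :=
  stmt_11_general hhn G hconn x δ hδ hne hgap xstar hxstar
end

section
/- Let x : [n] → ℝ, let E be the edge set of a simple undirected graph on [n], and suppose agent p updates to x_p* (the average of x over its closed neighborhood N_p) while all other values stay fixed. Let E' be any edge set that agrees with E on pairs not containing p and whose edges at p form a subset of those of E. Define Z = ∑_{(i,j): i,j ∈[n]} (x_i − x_j)²·1{(i,j) ∈ E} (sum over ordered pairs) and Z' the analogous quantity for the updated values and E'. Then Z − Z' ≥ 2(|N_p| + 1)(x_p − x_p*)² ≥ 0; in particular Z' ≤ Z. -/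
/-!
Only pairs containing `p` change, and the ordered sum counts each of them twice, so
`Z - Z' = 2 ∑ⱼ (old term at (p, j) - new term at (p, j))`. Since `p` can only lose edges, the new
term is at most `(x_p* - x_j)²` over the old neighbours `j`. As `x_p*` is the mean of `x` over
`N_p`, the parallel-axis identity
`∑_{N_p} (x_p - x_j)² = ∑_{N_p} (x_p* - x_j)² + |N_p| (x_p - x_p*)²`
bounds the sum of the differences below by `(|N_p| + 1)(x_p - x_p*)²`, the extra square being the
`j = p` term on the right.
-/

open Finset

theorem Finset.sum_sq_sub_eq_sum_sq_sub_mean_add {ι : Type*} (s : Finset ι) (y : ι → ℝ) (a : ℝ) :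
    ∑ j ∈ s, (a - y j) ^ 2 =
      ∑ j ∈ s, ((∑ i ∈ s, y i) / #s - y j) ^ 2 + #s * (a - (∑ i ∈ s, y i) / #s) ^ 2 := by
  set c := (∑ i ∈ s, y i) / #s
  rcases s.eq_empty_or_nonempty with rfl | hs
  · simp
  have hc : ∑ j ∈ s, (c - y j) = 0 := by
    rw [sum_sub_distrib, sum_const, nsmul_eq_mul, mul_div_cancel₀ _ (by simpa using hs.ne_empty),
      sub_self]
  have hexpand : ∀ j ∈ s, (a - y j) ^ 2 = (c - y j) ^ 2 + 2 * (a - c) * (c - y j) + (a - c) ^ 2 :=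
    fun j _ => by ring
  rw [sum_congr rfl hexpand, sum_add_distrib, sum_add_distrib, ← mul_sum, hc, sum_const,
    nsmul_eq_mul]
  ring

theorem Finset.sum_sum_eq_two_nsmul_sum_of_eq_zero_off {ι M : Type*} [Fintype ι] [DecidableEq ι]
    [AddCommMonoid M] (h : ι → ι → M) (p : ι) (hsymm : ∀ i j, h i j = h j i) (hpp : h p p = 0)
    (hoff : ∀ i j, i ≠ p → j ≠ p → h i j = 0) :
    ∑ i, ∑ j, h i j = 2 • ∑ j, h p j := by
  have hsplit : ∀ i j, h i j = (if i = p then h p j else 0) + (if j = p then h p i else 0) := by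
    intro i j
    by_cases hi : i = p <;> by_cases hj : j = p <;> simp_all
  rw [sum_congr rfl fun i _ => sum_congr rfl fun j _ => hsplit i j]
  simp only [sum_add_distrib, sum_ite_irrel, sum_const_zero, sum_ite_eq', mem_univ, if_true,
    two_nsmul]

namespace SimpleGraph

variable {V : Type*} {G G' : SimpleGraph V} [DecidableRel G.Adj] [DecidableRel G'.Adj]

def pairEnergy (G : SimpleGraph V) [DecidableRel G.Adj] (x : V → ℝ) (i j : V) : ℝ :=
  if G.Adj i j then (x i - x j) ^ 2 else 0

theorem pairEnergy_comm (x : V → ℝ) (i j : V) : G.pairEnergy x i j = G.pairEnergy x j i := by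
  simp only [pairEnergy, G.adj_comm i j, sub_sq_comm (x i)]

theorem pairEnergy_self (x : V → ℝ) (i : V) : G.pairEnergy x i i = 0 :=
  if_neg G.irrefl

theorem pairEnergy_update_le [DecidableEq V] {p : V} (hle : ∀ j, G'.Adj p j → G.Adj p j)
    (x : V → ℝ) (c : ℝ) (j : V) :
    G'.pairEnergy (Function.update x p c) p j ≤ if G.Adj p j then (c - x j) ^ 2 else 0 := by
  by_cases h : G'.Adj p j
  · rw [pairEnergy, if_pos h, if_pos (hle j h), Function.update_self,
      Function.update_of_ne (G'.ne_of_adj h).symm]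
  · rw [pairEnergy, if_neg h]
    split_ifs <;> positivity

variable [Fintype V]

def dirichletEnergy (G : SimpleGraph V) [DecidableRel G.Adj] (x : V → ℝ) : ℝ :=
  ∑ i, ∑ j, G.pairEnergy x i j

theorem dirichletEnergy_sub_eq_two_mul_sum [DecidableEq V] {x x' : V → ℝ} {p : V}
    (hadj : ∀ i j, i ≠ p → j ≠ p → (G'.Adj i j ↔ G.Adj i j)) (hx : ∀ i, i ≠ p → x' i = x i) :
    G.dirichletEnergy x - G'.dirichletEnergy x' =
      2 * ∑ j, (G.pairEnergy x p j - G'.pairEnergy x' p j) := by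
  rw [dirichletEnergy, dirichletEnergy, ← sum_sub_distrib]
  simp_rw [← sum_sub_distrib]
  rw [sum_sum_eq_two_nsmul_sum_of_eq_zero_off _ p, nsmul_eq_mul, Nat.cast_ofNat]
  · intro i j
    rw [pairEnergy_comm, pairEnergy_comm (G := G')]
  · rw [pairEnergy_self, pairEnergy_self, sub_self]
  · intro i j hi hj
    simp only [pairEnergy, hadj i j hi hj, hx i hi, hx j hj, sub_self]

theorem sum_ite_adj_eq_sum_neighborFinset {M : Type*} [AddCommMonoid M] (p : V) (f : V → M) :
    ∑ j, (if G.Adj p j then f j else 0) = ∑ j ∈ G.neighborFinset p, f j := by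
  rw [← sum_filter, neighborFinset_eq_filter]

theorem sum_pairEnergy_sub_sq_sub_mean [DecidableEq V] (x : V → ℝ) (p : V) {Np : Finset V}
    (hNp : Np = insert p (G.neighborFinset p)) {c : ℝ} (hc : c = (∑ j ∈ Np, x j) / #Np) :
    ∑ j, (G.pairEnergy x p j - if G.Adj p j then (c - x j) ^ 2 else 0) =
      (#Np + 1) * (x p - c) ^ 2 := by
  subst hNp
  have hp : p ∉ G.neighborFinset p := by simp
  have hmean := sum_sq_sub_eq_sum_sq_sub_mean_add (insert p (G.neighborFinset p)) x (x p)
  rw [← hc, sum_insert hp, sum_insert hp, sub_self, zero_pow two_ne_zero, zero_add] at hmean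
  rw [sum_sub_distrib]
  unfold pairEnergy
  rw [sum_ite_adj_eq_sum_neighborFinset, sum_ite_adj_eq_sum_neighborFinset]
  linarith

end SimpleGraph

theorem stmt_12 {n : ℕ} (x : Fin n → ℝ) (p : Fin n)
    (G G' : SimpleGraph (Fin n)) [DecidableRel G.Adj] [DecidableRel G'.Adj]
    (hagree : ∀ i j : Fin n, i ≠ p → j ≠ p → (G'.Adj i j ↔ G.Adj i j))
    (hcontract : ∀ j : Fin n, G'.Adj p j → G.Adj p j)
    (Np : Finset (Fin n)) (hNp : Np = insert p (G.neighborFinset p))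
    (xstar : ℝ) (hxstar : xstar = (∑ j ∈ Np, x j) / (Np.card : ℝ))
    (x' : Fin n → ℝ) (hx' : x' = Function.update x p xstar)
    (Z Z' : ℝ)
    (hZ : Z = ∑ i, ∑ j, if G.Adj i j then (x i - x j) ^ 2 else 0)
    (hZ' : Z' = ∑ i, ∑ j, if G'.Adj i j then (x' i - x' j) ^ 2 else 0) :
    Z - Z' ≥ 2 * ((Np.card : ℝ) + 1) * (x p - xstar) ^ 2 ∧ Z' ≤ Z := by
  subst hx' hZ hZ'
  have hdiff := SimpleGraph.dirichletEnergy_sub_eq_two_mul_sum (G := G) (x := x) hagree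
    fun i hi => Function.update_of_ne hi xstar x
  have hstep := (SimpleGraph.sum_pairEnergy_sub_sq_sub_mean x p hNp hxstar).symm.trans_le <|
    sum_le_sum fun j _ => sub_le_sub_left (SimpleGraph.pairEnergy_update_le hcontract x xstar j) _
  have hnonneg : 0 ≤ ((#Np : ℝ) + 1) * (x p - xstar) ^ 2 := by positivity
  show G.dirichletEnergy x - G'.dirichletEnergy _ ≥ _ ∧ G'.dirichletEnergy _ ≤ G.dirichletEnergy x
  constructor <;> linarith
end
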